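/- Let E be a Hermitian holomorphic vector bundle over a complex manifold X with metric h. If E is Griffiths positive with constant c, i.e. the Hermitian form Θ̃_{E,h}(ξ⊗v) ≥ c|ξ⊗v|² for all decomposable tensors ξ⊗v ∈ T_X ⊗ E, then E ⊗ det(E) is Nakano positive with the same constant: Θ̃_{E⊗det E, h}(τ) ≥ c|τ|² for all tensors τ ∈ T_X ⊗ (E ⊗ det E). -/

import Mathlib

/-!
Average Griffiths positivity over the decomposable tensors `ξ_ε ⊗ v_ε`, where
`v_ε = (ω ^ ε_l)_l` runs over the vectors of cube roots of unity, `ε ∈ (ℤ/3)^m`, and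
`ξ_ε = τ(v̄_ε)`. Orthogonality of the characters of `(ℤ/3)^m` gives
`𝔼 v̄_a v_b v_l v̄_u = δ_ab δ_lu + δ_al δ_bu - δ_ab δ_al δ_lu`, so the average of
`Θ̃(ξ_ε ⊗ v_ε)` is `Θ̃_{E ⊗ det E}(τ) - ∑_l Θ̃(τ_{·l} ⊗ e_l)`, while the average of
`|ξ_ε|² |v_ε|²` is `m |τ|²`. Griffiths positivity applied to each `τ_{·l} ⊗ e_l` then yields
`Θ̃_{E ⊗ det E}(τ) ≥ (m + 1) c |τ|² ≥ c |τ|²`.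
-/

open Complex Finset
open ComplexConjugate ZMod

lemma ZMod.natCast_ne_zero_of_pos_of_lt {N k : ℕ} (hk : 0 < k) (hkN : k < N) :
    (k : ZMod N) ≠ 0 := by
  rw [Ne, ZMod.natCast_eq_zero_iff]
  exact fun h => absurd (Nat.le_of_dvd hk h) (by omega)

section Phases
variable {N : ℕ} [NeZero N] {κ : Type*} [Fintype κ] [DecidableEq κ]

lemma sum_stdAddChar_dotProduct_mul_conj (d d' : κ → ZMod N) :
    ∑ ε : κ → ZMod N, stdAddChar (d ⬝ᵥ ε) * conj (stdAddChar (d' ⬝ᵥ ε)) =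
      if d = d' then (N : ℂ) ^ Fintype.card κ else 0 := by
  let ψ : AddChar (κ → ZMod N) ℂ := stdAddChar.compAddMonoidHom
    (AddMonoidHom.mk' (fun ε => (d - d') ⬝ᵥ ε) fun _ _ => dotProduct_add ..)
  have hψ (ε : κ → ZMod N) : ψ ε = stdAddChar (d ⬝ᵥ ε) * conj (stdAddChar (d' ⬝ᵥ ε)) := by
    rw [← AddChar.map_neg_eq_conj, ← AddChar.map_add_eq_mul, ← sub_eq_add_neg, ← sub_dotProduct]
    rfl
  have hψ_zero : ψ = 0 ↔ d = d' := by
    rw [AddChar.eq_zero_iff, ← sub_eq_zero, ← dotProduct_eq_iff (w := 0)]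
    refine forall_congr' fun ε => ?_
    rw [zero_dotProduct, ← (stdAddChar (N := N)).map_zero_eq_one]
    exact injective_stdAddChar.eq_iff
  simp_rw [← hψ]
  simp [AddChar.sum_eq_ite, hψ_zero]

lemma sum_conj_stdAddChar_mul_stdAddChar (hN : 1 < N) (a b : κ) :
    ∑ ε : κ → ZMod N, conj (stdAddChar (ε a)) * stdAddChar (ε b) =
      if a = b then (N : ℂ) ^ Fintype.card κ else 0 := by
  have h1 : (1 : ZMod N) ≠ 0 := by exact_mod_cast natCast_ne_zero_of_pos_of_lt one_pos hN
  have horth := sum_stdAddChar_dotProduct_mul_conj (Pi.single b (1 : ZMod N)) (Pi.single a 1)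
  simp only [single_one_dotProduct] at horth
  simp_rw [mul_comm (conj _), horth]
  congr 1
  apply propext
  constructor
  · intro h
    by_contra hab
    simpa [Pi.single_apply, Ne.symm hab, h1] using congrFun h b
  · rintro rfl; rfl

lemma sum_conj_stdAddChar_mul_mul_conj (hN : 2 < N) (a b l u : κ) :
    ∑ ε : κ → ZMod N,
        conj (stdAddChar (ε a)) * stdAddChar (ε b) * stdAddChar (ε l) * conj (stdAddChar (ε u)) =
      if (b = a ∧ l = u) ∨ (b = u ∧ l = a) then (N : ℂ) ^ Fintype.card κ else 0 := by
  have h1 : (1 : ZMod N) ≠ 0 := by exact_mod_cast natCast_ne_zero_of_pos_of_lt one_pos (by omega)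
  have h2 : (1 + 1 : ZMod N) ≠ 0 := by exact_mod_cast natCast_ne_zero_of_pos_of_lt two_pos hN
  have horth := sum_stdAddChar_dotProduct_mul_conj (Pi.single b 1 + Pi.single l 1 : κ → ZMod N)
    (Pi.single a 1 + Pi.single u 1)
  simp only [add_dotProduct, single_one_dotProduct, AddChar.map_add_eq_mul, map_mul,
    Pi.single_add_single_eq_single_add_single h1 h1, h2, true_and, false_and, or_false] at horth
  rw [← horth]
  exact sum_congr rfl fun ε _ => by ring

lemma normSq_stdAddChar (x : ZMod N) : normSq (stdAddChar x) = 1 := by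
  simp [normSq_eq_norm_sq]

lemma sum_twisted_mul_conj_twisted (hN : 2 < N) (x y : κ → ℂ) (l u : κ) :
    ∑ ε : κ → ZMod N, (∑ a, x a * conj (stdAddChar (ε a))) *
        conj (∑ b, y b * conj (stdAddChar (ε b))) * stdAddChar (ε l) * conj (stdAddChar (ε u)) =
      (N : ℂ) ^ Fintype.card κ * ((if l = u then ∑ a, x a * conj (y a) else 0) +
        x l * conj (y u) - if l = u then x l * conj (y l) else 0) := by
  have expand (ε : κ → ZMod N) :
      (∑ a, x a * conj (stdAddChar (ε a))) * conj (∑ b, y b * conj (stdAddChar (ε b))) *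
          stdAddChar (ε l) * conj (stdAddChar (ε u)) =
        ∑ a, ∑ b, x a * conj (y b) * (conj (stdAddChar (ε a)) * stdAddChar (ε b) *
          stdAddChar (ε l) * conj (stdAddChar (ε u))) := by
    rw [map_sum, sum_mul_sum]
    simp only [sum_mul, map_mul, Complex.conj_conj]
    exact sum_congr rfl fun a _ => sum_congr rfl fun b _ => by ring
  calc _ = ∑ a, ∑ b, x a * conj (y b) * ∑ ε : κ → ZMod N, conj (stdAddChar (ε a)) *
          stdAddChar (ε b) * stdAddChar (ε l) * conj (stdAddChar (ε u)) := by
        simp_rw [expand, mul_sum]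
        rw [sum_comm]
        exact sum_congr rfl fun a _ => sum_comm
    _ = _ := by
        simp_rw [sum_conj_stdAddChar_mul_mul_conj hN]
        by_cases hlu : l = u
        · subst hlu
          have hcond (a b : κ) : b = a ∨ b = l ∧ l = a ↔ b = a :=
            ⟨by rintro (rfl | ⟨rfl, rfl⟩) <;> rfl, Or.inl⟩
          simp [hcond, mul_sum, mul_comm]
        · simp [hlu, ite_and, mul_comm]

lemma sum_normSq_twisted (hN : 1 < N) (x : κ → ℂ) :
    ∑ ε : κ → ZMod N, normSq (∑ a, x a * conj (stdAddChar (ε a))) =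
      N ^ Fintype.card κ * ∑ a, normSq (x a) := by
  apply Complex.ofReal_injective
  push_cast
  simp_rw [← Complex.mul_conj, map_sum, map_mul, Complex.conj_conj, sum_mul_sum]
  rw [sum_comm]
  simp_rw [mul_sum]
  refine sum_congr rfl fun a _ => ?_
  rw [sum_comm]
  simp_rw [mul_mul_mul_comm (x a), ← mul_sum, sum_conj_stdAddChar_mul_stdAddChar hN]
  simp [mul_comm]

end Phases

section Forms
variable {ι κ : Type*} [Fintype ι] [Fintype κ] [DecidableEq κ]

def griffithsForm (cf : ι → ι → κ → κ → ℂ) (ξ : ι → ℂ) (v : κ → ℂ) : ℂ :=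
  ∑ j, ∑ k, ∑ l, ∑ u, cf j k l u * ξ j * conj (ξ k) * v l * conj (v u)

def nakanoForm (cf : ι → ι → κ → κ → ℂ) (τ : ι → κ → ℂ) : ℂ :=
  ∑ j, ∑ k, ∑ l, ∑ u, cf j k l u * τ j l * conj (τ k u)

/-- `det E` has curvature `tr Θ_E`, so `Θ_{E ⊗ det E} = Θ_E ⊗ 1 + 1 ⊗ tr Θ_E`. -/
def tensorDetCurvature (cf : ι → ι → κ → κ → ℂ) (j k : ι) (l u : κ) : ℂ :=
  cf j k l u + if l = u then ∑ ν, cf j k ν ν else 0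

lemma nakanoForm_tensorDetCurvature (cf : ι → ι → κ → κ → ℂ) (τ : ι → κ → ℂ) :
    nakanoForm (tensorDetCurvature cf) τ =
      nakanoForm cf τ + ∑ j, ∑ k, (∑ ν, cf j k ν ν) * ∑ a, τ j a * conj (τ k a) := by
  simp [nakanoForm, tensorDetCurvature, add_mul, sum_add_distrib, mul_sum, mul_assoc]

lemma griffithsForm_single (cf : ι → ι → κ → κ → ℂ) (ξ : ι → ℂ) (l : κ) :
    griffithsForm cf ξ (Pi.single l 1) = ∑ j, ∑ k, cf j k l l * ξ j * conj (ξ k) := by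
  simp [griffithsForm, Pi.single_apply]

lemma sum_griffithsForm_phase {N : ℕ} [NeZero N] (hN : 2 < N) (cf : ι → ι → κ → κ → ℂ)
    (τ : ι → κ → ℂ) :
    ∑ ε : κ → ZMod N, griffithsForm cf (fun j => ∑ a, τ j a * conj (stdAddChar (ε a)))
        (fun l => stdAddChar (ε l)) =
      N ^ Fintype.card κ * (nakanoForm (tensorDetCurvature cf) τ -
        ∑ l, griffithsForm cf (fun j => τ j l) (Pi.single l 1)) := by
  have hterm (j k : ι) (l u : κ) :
      ∑ ε : κ → ZMod N, cf j k l u * (∑ a, τ j a * conj (stdAddChar (ε a))) *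
          conj (∑ b, τ k b * conj (stdAddChar (ε b))) * stdAddChar (ε l) *
          conj (stdAddChar (ε u)) =
        N ^ Fintype.card κ * (cf j k l u * ((if l = u then ∑ a, τ j a * conj (τ k a) else 0) +
          τ j l * conj (τ k u) - if l = u then τ j l * conj (τ k l) else 0)) := by
    simp_rw [mul_assoc (cf j k l u), ← mul_sum, sum_twisted_mul_conj_twisted hN]
    ring
  calc _ = ∑ j, ∑ k, ∑ l, ∑ u, ∑ ε : κ → ZMod N, cf j k l u *
        (∑ a, τ j a * conj (stdAddChar (ε a))) * conj (∑ b, τ k b * conj (stdAddChar (ε b))) *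
          stdAddChar (ε l) * conj (stdAddChar (ε u)) := by
        simp only [griffithsForm]
        rw [sum_comm]; refine sum_congr rfl fun j _ => ?_
        rw [sum_comm]; refine sum_congr rfl fun k _ => ?_
        rw [sum_comm]; refine sum_congr rfl fun l _ => ?_
        rw [sum_comm]
    _ = N ^ Fintype.card κ * (nakanoForm cf τ +
          ∑ j, ∑ k, (∑ ν, cf j k ν ν) * ∑ a, τ j a * conj (τ k a) -
          ∑ j, ∑ k, ∑ l, cf j k l l * τ j l * conj (τ k l)) := by
        simp only [hterm, ← mul_sum]
        congr 1
        simp only [mul_add, mul_sub, sum_add_distrib, sum_sub_distrib, mul_ite, mul_zero,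
          sum_ite_eq, mem_univ, if_true, nakanoForm, sum_mul, mul_assoc]
        ring
    _ = _ := by
        rw [nakanoForm_tensorDetCurvature]
        simp only [griffithsForm_single]
        congr 2
        symm
        rw [sum_comm]
        exact sum_congr rfl fun j _ => sum_comm

def IsGriffithsPositive (cf : ι → ι → κ → κ → ℂ) (c : ℝ) : Prop :=
  ∀ (ξ : ι → ℂ) (v : κ → ℂ),
    c * ((∑ j, normSq (ξ j)) * ∑ l, normSq (v l)) ≤ (griffithsForm cf ξ v).re

def IsNakanoPositive (cf : ι → ι → κ → κ → ℂ) (c : ℝ) : Prop :=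
  ∀ τ : ι → κ → ℂ, c * ∑ j, ∑ l, normSq (τ j l) ≤ (nakanoForm cf τ).re

namespace IsGriffithsPositive

variable {cf : ι → ι → κ → κ → ℂ} {c : ℝ}

lemma le_re_sum_griffithsForm_single (h : IsGriffithsPositive cf c) (τ : ι → κ → ℂ) :
    c * ∑ j, ∑ l, normSq (τ j l) ≤ (∑ l, griffithsForm cf (fun j => τ j l) (Pi.single l 1)).re := by
  rw [re_sum, sum_comm, mul_sum]
  refine sum_le_sum fun l _ => ?_
  have hv : ∑ u, normSq ((Pi.single l 1 : κ → ℂ) u) = 1 := by simp [Pi.single_apply]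
  simpa only [hv, mul_one] using h (fun j => τ j l) (Pi.single l 1)

lemma le_re_sum_griffithsForm_phase (h : IsGriffithsPositive cf c) {N : ℕ} [NeZero N]
    (hN : 1 < N) (τ : ι → κ → ℂ) :
    c * Fintype.card κ * (N ^ Fintype.card κ * ∑ j, ∑ l, normSq (τ j l)) ≤
      (∑ ε : κ → ZMod N, griffithsForm cf (fun j => ∑ a, τ j a * conj (stdAddChar (ε a)))
        (fun l => stdAddChar (ε l))).re := by
  have hnorm : ∑ ε : κ → ZMod N, ∑ j, normSq (∑ a, τ j a * conj (stdAddChar (ε a))) =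
      N ^ Fintype.card κ * ∑ j, ∑ l, normSq (τ j l) := by
    rw [sum_comm, mul_sum]
    exact sum_congr rfl fun j _ => sum_normSq_twisted hN (τ j)
  rw [← hnorm, mul_sum, re_sum]
  refine sum_le_sum fun ε _ => ?_
  have hε := h (fun j => ∑ a, τ j a * conj (stdAddChar (ε a))) (fun l => stdAddChar (ε l))
  simp only [normSq_stdAddChar, sum_const, card_univ, nsmul_eq_mul, mul_one] at hε
  exact le_of_eq_of_le (by ring) hε

theorem isNakanoPositive_tensorDetCurvature (h : IsGriffithsPositive cf c) (hc : 0 ≤ c) :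
    IsNakanoPositive (tensorDetCurvature cf) c := by
  intro τ
  have hphase := h.le_re_sum_griffithsForm_phase (N := 3) (by norm_num) τ
  have hdiag := h.le_re_sum_griffithsForm_single τ
  have haverage := congrArg re (sum_griffithsForm_phase (N := 3) (by norm_num) cf τ)
  rw [Nat.cast_ofNat] at hphase haverage
  rw [show (3 : ℂ) ^ Fintype.card κ = ((3 ^ Fintype.card κ : ℝ) : ℂ) by push_cast; rfl,
    re_ofReal_mul, sub_re] at haverage
  have hT : 0 ≤ ∑ j, ∑ l, normSq (τ j l) :=
    sum_nonneg fun j _ => sum_nonneg fun l _ => normSq_nonneg _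
  have hcmT : 0 ≤ c * Fintype.card κ * (3 ^ Fintype.card κ * ∑ j, ∑ l, normSq (τ j l)) := by
    positivity
  have h3 : (0 : ℝ) < 3 ^ Fintype.card κ := by positivity
  nlinarith

end IsGriffithsPositive

end Forms

theorem griffiths_pos_implies_nakano_pos_tensor_det_general
    (n m : ℕ) (cf : Fin n → Fin n → Fin m → Fin m → ℂ)
    (c : ℝ) (hc : 0 ≤ c)
    (hGriffiths : ∀ (ξ : Fin n → ℂ) (v : Fin m → ℂ),
      c * ((∑ j, Complex.normSq (ξ j)) * (∑ l, Complex.normSq (v l))) ≤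
        (∑ j, ∑ k, ∑ l, ∑ u,
          cf j k l u * ξ j * starRingEnd ℂ (ξ k) * v l * starRingEnd ℂ (v u)).re) :
    ∀ τ : Fin n → Fin m → ℂ,
      c * (∑ j, ∑ l, Complex.normSq (τ j l)) ≤
        (∑ j, ∑ k, ∑ l, ∑ u,
          (cf j k l u + (if l = u then ∑ ν, cf j k ν ν else 0)) *
            τ j l * starRingEnd ℂ (τ k u)).re :=
  IsGriffithsPositive.isNakanoPositive_tensorDetCurvature hGriffiths hc

/-- Demailly's lemma: Griffiths positivity of `E` (with constant `c`) implies
Nakano positivity of `E ⊗ det E` (with the same constant), expressed in terms of the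
curvature coefficients `cf j k l u` of `E` in a local chart with orthonormal frame.
The curvature of `E ⊗ det E` has coefficients
`cf j k l u + δ_{l u} * ∑ ν, cf j k ν ν`. -/
theorem griffiths_pos_implies_nakano_pos_tensor_det
    (n m : ℕ) (cf : Fin n → Fin n → Fin m → Fin m → ℂ)
    (hherm : ∀ j k l u, cf j k l u = starRingEnd ℂ (cf k j u l))
    (c : ℝ) (hc : 0 ≤ c)
    (hGriffiths : ∀ (ξ : Fin n → ℂ) (v : Fin m → ℂ),
      c * ((∑ j, Complex.normSq (ξ j)) * (∑ l, Complex.normSq (v l))) ≤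
        (∑ j, ∑ k, ∑ l, ∑ u,
          cf j k l u * ξ j * starRingEnd ℂ (ξ k) * v l * starRingEnd ℂ (v u)).re) :
    ∀ τ : Fin n → Fin m → ℂ,
      c * (∑ j, ∑ l, Complex.normSq (τ j l)) ≤
        (∑ j, ∑ k, ∑ l, ∑ u,
          (cf j k l u + (if l = u then ∑ ν, cf j k ν ν else 0)) *
            τ j l * starRingEnd ℂ (τ k u)).re :=
  griffiths_pos_implies_nakano_pos_tensor_det_general n m cf c hc hGriffiths
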